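/- Let {E_1, …, E_m} be a unitary error set on ℂ^N, let G be an N×K complex matrix with Km ≤ N, and suppose X = Σ_{i=1}^m E_i G ⊗ ⟨i| is a δ-approximate isometry for some 0 ≤ δ < 1. Let V = isometrize(G) = G·(G†G)^{−1/2} (well-defined since G then has rank K). Then Y = Σ_{i=1}^m E_i V ⊗ ⟨i| is a (2δ/(1−δ))-approximate isometry. -/

import Mathlib

open scoped Kronecker ComplexOrder
open Matrix MeasureTheory ProbabilityTheory

noncomputable section

/-- The Euclidean (ℓ²) norm of a finitely indexed complex vector. -/
def enorm2 {ι : Type*} [Fintype ι] (x : ι → ℂ) : ℝ :=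
  Real.sqrt (∑ i, ‖x i‖ ^ 2)

/-- `T` is a `δ`-approximate isometry: every singular value lies in `[1-δ, 1+δ]`,
equivalently `(1-δ)‖c‖ ≤ ‖Tc‖ ≤ (1+δ)‖c‖` for every vector `c`. -/
def IsApproxIsometry {ι κ : Type*} [Fintype ι] [Fintype κ] (δ : ℝ) (T : Matrix ι κ ℂ) : Prop :=
  ∀ c : κ → ℂ,
    (1 - δ) * enorm2 c ≤ enorm2 (T.mulVec c) ∧ enorm2 (T.mulVec c) ≤ (1 + δ) * enorm2 c

/-- A unitary error set: each `E i` is unitary and `tr((E i)ᴴ E j) = 0` for `i ≠ j`. -/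
def IsUnitaryErrorSet {ι : Type*} {N : ℕ} (E : ι → Matrix (Fin N) (Fin N) ℂ) : Prop :=
  (∀ i, (E i)ᴴ * E i = 1 ∧ E i * (E i)ᴴ = 1) ∧
    ∀ i j : ι, i ≠ j → ((E i)ᴴ * E j).trace = 0

/-- The `N × (Km)` matrix `Y = Σ_i E_i V ⊗ ⟨i|`, whose column indexed by `(j, i)`
is the vector `E_i · V · e_j`. -/
def shiftMat {N K m : ℕ} (E : Fin m → Matrix (Fin N) (Fin N) ℂ) (V : Matrix (Fin N) (Fin K) ℂ) :
    Matrix (Fin N) (Fin K × Fin m) ℂ :=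
  Matrix.of fun a ji => (E ji.2 * V) a ji.1

/-- The operator norm (largest singular value) of a complex matrix. -/
def opNorm {ι κ : Type*} [Fintype ι] [Fintype κ] (A : Matrix ι κ ℂ) : ℝ :=
  sSup {r | ∃ c : κ → ℂ, enorm2 c = 1 ∧ r = enorm2 (A.mulVec c)}

/-- The smallest singular value of a (tall) complex matrix. -/
def sMin {ι κ : Type*} [Fintype ι] [Fintype κ] (A : Matrix ι κ ℂ) : ℝ :=
  sInf {r | ∃ c : κ → ℂ, enorm2 c = 1 ∧ r = enorm2 (A.mulVec c)}

/-- The positive semidefinite square root of a positive semidefinite matrix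
(the definition `Matrix.PosSemidef.sqrt` of the older Mathlib, since removed). -/
def Matrix.PosSemidef.sqrt {n 𝕜 : Type*} [Fintype n] [RCLike 𝕜] [DecidableEq n]
    {A : Matrix n n 𝕜} (hA : A.PosSemidef) : Matrix n n 𝕜 :=
  hA.1.eigenvectorUnitary.1 * diagonal ((↑) ∘ (√·) ∘ hA.1.eigenvalues) *
    (star hA.1.eigenvectorUnitary : Matrix n n 𝕜)

/-- `isometrize G = G (GᴴG)^{-1/2}`: round all singular values of `G` to `1`. -/
def isometrize {N K : ℕ} (G : Matrix (Fin N) (Fin K) ℂ) : Matrix (Fin N) (Fin K) ℂ :=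
  G * ((Matrix.posSemidef_conjTranspose_mul_self G).sqrt)⁻¹

/-- Round the singular values of a wide matrix `D̂` to one: `(D̂ D̂ᴴ)^{-1/2} D̂`. -/
def coisometrize {ι : Type*} [Fintype ι] [DecidableEq ι] {N : ℕ}
    (Dhat : Matrix ι (Fin N) ℂ) : Matrix ι (Fin N) ℂ :=
  ((Matrix.posSemidef_self_mul_conjTranspose Dhat).sqrt)⁻¹ * Dhat

end


/-!
Each block `E_i G` of `X` is a `δ`-approximate isometry, hence so is `G` (`E_i` is unitary) and
so is `P = (GᴴG)^{1/2}`, which has the same Gram matrix as `G`; in particular `P` is invertible.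
Since `Y = X (P ⊗ 1)⁻¹`, for `d = (P ⊗ 1)⁻¹ c` both `‖c‖ = ‖(P ⊗ 1) d‖` and `‖Y c‖ = ‖X d‖`
lie in `[(1-δ)‖d‖, (1+δ)‖d‖]`, so
`‖Y c‖ / ‖c‖ ∈ [(1-δ)/(1+δ), (1+δ)/(1-δ)] ⊆ [1 - 2δ/(1-δ), 1 + 2δ/(1-δ)]`.
-/

namespace Matrix.PosSemidef

variable {n 𝕜 : Type*} [Fintype n] [DecidableEq n] [RCLike 𝕜] {A : Matrix n n 𝕜}

lemma conjTranspose_sqrt (hA : A.PosSemidef) : hA.sqrtᴴ = hA.sqrt := by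
  simp only [Matrix.PosSemidef.sqrt]
  rw [conjTranspose_mul, conjTranspose_mul, diagonal_conjTranspose, ← star_eq_conjTranspose,
    ← star_eq_conjTranspose, star_star, Matrix.mul_assoc]
  congr 3
  ext i
  simp

lemma sqrt_mul_self (hA : A.PosSemidef) : hA.sqrt * hA.sqrt = A := by
  have hU : (star hA.1.eigenvectorUnitary : Matrix n n 𝕜) * hA.1.eigenvectorUnitary.1 = 1 :=
    Unitary.coe_star_mul_self _
  conv_rhs => rw [hA.1.spectral_theorem, Unitary.conjStarAlgAut_apply]
  simp only [Matrix.PosSemidef.sqrt, Matrix.mul_assoc]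
  rw [← Matrix.mul_assoc (star _ : Matrix n n 𝕜), hU, Matrix.one_mul,
    ← Matrix.mul_assoc (diagonal _) (diagonal _), diagonal_mul_diagonal]
  congr 3
  ext i
  simp only [Function.comp_apply]
  rw [← RCLike.ofReal_mul, Real.mul_self_sqrt (hA.eigenvalues_nonneg i)]

lemma conjTranspose_sqrt_mul_sqrt (hA : A.PosSemidef) : hA.sqrtᴴ * hA.sqrt = A := by
  rw [hA.conjTranspose_sqrt, hA.sqrt_mul_self]

end Matrix.PosSemidef

section enorm2

variable {ι ι' κ : Type*} [Fintype ι] [Fintype ι'] [Fintype κ]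

lemma enorm2_nonneg (x : ι → ℂ) : 0 ≤ enorm2 x :=
  Real.sqrt_nonneg _

lemma sq_enorm2 (x : ι → ℂ) : enorm2 x ^ 2 = ∑ i, ‖x i‖ ^ 2 :=
  Real.sq_sqrt (by positivity)

lemma enorm2_eq_zero_iff {x : ι → ℂ} : enorm2 x = 0 ↔ x = 0 := by
  rw [← sq_eq_zero_iff, sq_enorm2, Finset.sum_eq_zero_iff_of_nonneg (fun i _ => by positivity),
    funext_iff]
  simp

lemma sq_enorm2_eq_re_star_dotProduct (x : ι → ℂ) : enorm2 x ^ 2 = (star x ⬝ᵥ x).re := by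
  rw [sq_enorm2, dotProduct, Complex.re_sum]
  congr 1; ext i
  simp [Complex.conj_mul', ← Complex.ofReal_pow]

lemma star_mulVec_dotProduct_mulVec (M : Matrix ι κ ℂ) (v : κ → ℂ) :
    star (M *ᵥ v) ⬝ᵥ (M *ᵥ v) = star v ⬝ᵥ ((Mᴴ * M) *ᵥ v) := by
  rw [star_mulVec, dotProduct_mulVec, vecMul_vecMul, ← dotProduct_mulVec]

lemma enorm2_mulVec_eq_of_conjTranspose_mul_self_eq {A : Matrix ι κ ℂ} {B : Matrix ι' κ ℂ}
    (h : Aᴴ * A = Bᴴ * B) (v : κ → ℂ) : enorm2 (A *ᵥ v) = enorm2 (B *ᵥ v) := by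
  rw [← sq_eq_sq₀ (enorm2_nonneg _) (enorm2_nonneg _), sq_enorm2_eq_re_star_dotProduct,
    sq_enorm2_eq_re_star_dotProduct, star_mulVec_dotProduct_mulVec,
    star_mulVec_dotProduct_mulVec, h]

lemma sq_enorm2_prod (c : κ × ι → ℂ) :
    enorm2 c ^ 2 = ∑ i, enorm2 (fun k => c (k, i)) ^ 2 := by
  simp only [sq_enorm2]
  rw [Fintype.sum_prod_type, Finset.sum_comm]

end enorm2

lemma kronecker_one_mulVec_apply {ι ι' κ : Type*} [Fintype ι] [Fintype κ] [DecidableEq ι]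
    (A : Matrix ι' κ ℂ) (c : κ × ι → ℂ) (k : ι') (i : ι) :
    ((A ⊗ₖ (1 : Matrix ι ι ℂ)) *ᵥ c) (k, i) = (A *ᵥ fun k' => c (k', i)) k := by
  simp only [mulVec, dotProduct, kroneckerMap_apply, one_apply, Fintype.sum_prod_type]
  refine Finset.sum_congr rfl fun k' _ => ?_
  simp [Finset.sum_ite_eq]

section IsApproxIsometry

variable {ι ι' κ : Type*} [Fintype ι] [Fintype ι'] [Fintype κ] {δ : ℝ}

lemma isApproxIsometry_congr {A : Matrix ι κ ℂ} {B : Matrix ι' κ ℂ} (h : Aᴴ * A = Bᴴ * B) :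
    IsApproxIsometry δ A ↔ IsApproxIsometry δ B := by
  simp only [IsApproxIsometry, enorm2_mulVec_eq_of_conjTranspose_mul_self_eq h]

lemma IsApproxIsometry.kronecker_one [DecidableEq ι] {A : Matrix ι' κ ℂ}
    (hA : IsApproxIsometry δ A) (hδ0 : 0 ≤ δ) (hδ1 : δ ≤ 1) :
    IsApproxIsometry δ (A ⊗ₖ (1 : Matrix ι ι ℂ)) := by
  intro c
  have hsq : enorm2 ((A ⊗ₖ (1 : Matrix ι ι ℂ)) *ᵥ c) ^ 2 =
      ∑ i, enorm2 (A *ᵥ fun k => c (k, i)) ^ 2 := by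
    rw [sq_enorm2_prod]
    simp only [kronecker_one_mulVec_apply]
  have hlow : ((1 - δ) * enorm2 c) ^ 2 ≤ enorm2 ((A ⊗ₖ (1 : Matrix ι ι ℂ)) *ᵥ c) ^ 2 := by
    rw [hsq, mul_pow, sq_enorm2_prod c, Finset.mul_sum]
    refine Finset.sum_le_sum fun i _ => ?_
    rw [← mul_pow]
    exact pow_le_pow_left₀ (mul_nonneg (sub_nonneg.2 hδ1) (enorm2_nonneg _)) (hA _).1 2
  have hupp : enorm2 ((A ⊗ₖ (1 : Matrix ι ι ℂ)) *ᵥ c) ^ 2 ≤ ((1 + δ) * enorm2 c) ^ 2 := by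
    rw [hsq, mul_pow, sq_enorm2_prod c, Finset.mul_sum]
    refine Finset.sum_le_sum fun i _ => ?_
    rw [← mul_pow]
    exact pow_le_pow_left₀ (enorm2_nonneg _) (hA _).2 2
  exact ⟨(sq_le_sq₀ (mul_nonneg (sub_nonneg.2 hδ1) (enorm2_nonneg _)) (enorm2_nonneg _)).1 hlow,
    (sq_le_sq₀ (enorm2_nonneg _) (mul_nonneg (by linarith) (enorm2_nonneg _))).1 hupp⟩

lemma IsApproxIsometry.isUnit [DecidableEq κ] {A : Matrix κ κ ℂ} (hA : IsApproxIsometry δ A)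
    (hδ : δ < 1) : IsUnit A := by
  refine mulVec_injective_iff_isUnit.mp fun v w hvw => sub_eq_zero.mp ?_
  have hlow := (hA (v - w)).1
  rw [mulVec_sub, hvw, sub_self, enorm2_eq_zero_iff.mpr rfl] at hlow
  exact enorm2_eq_zero_iff.mp <| le_antisymm
    (nonpos_of_mul_nonpos_right hlow (by linarith)) (enorm2_nonneg _)

lemma bounds_of_common_approx {a b y δ : ℝ} (hδ0 : 0 ≤ δ) (hδ1 : δ < 1) (hb : 0 ≤ b)
    (ha1 : (1 - δ) * b ≤ a) (ha2 : a ≤ (1 + δ) * b)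
    (hy1 : (1 - δ) * b ≤ y) (hy2 : y ≤ (1 + δ) * b) :
    (1 - 2 * δ / (1 - δ)) * a ≤ y ∧ y ≤ (1 + 2 * δ / (1 - δ)) * a := by
  have hpos : 0 < 1 - δ := by linarith
  have hlow : 1 - 2 * δ / (1 - δ) = (1 - 3 * δ) / (1 - δ) := by field_simp; ring
  have hupp : 1 + 2 * δ / (1 - δ) = (1 + δ) / (1 - δ) := by field_simp; ring
  rw [hlow, hupp, div_mul_eq_mul_div, div_mul_eq_mul_div, div_le_iff₀ hpos, le_div_iff₀ hpos]
  constructor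
  · rcases le_total 0 (1 - 3 * δ) with h | h
    · nlinarith [mul_le_mul_of_nonneg_left ha2 h, mul_le_mul_of_nonneg_right hy1 hpos.le,
        mul_nonneg hb (sq_nonneg δ)]
    · nlinarith [mul_nonneg hpos.le hb]
  · nlinarith [mul_le_mul_of_nonneg_right hy2 hpos.le,
      mul_le_mul_of_nonneg_left ha1 (by linarith : (0 : ℝ) ≤ 1 + δ)]

lemma IsApproxIsometry.mul_inv [DecidableEq κ] {X : Matrix ι κ ℂ} {Q : Matrix κ κ ℂ}
    (hX : IsApproxIsometry δ X) (hQ : IsApproxIsometry δ Q) (hδ0 : 0 ≤ δ) (hδ1 : δ < 1) :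
    IsApproxIsometry (2 * δ / (1 - δ)) (X * Q⁻¹) := by
  intro c
  have hc : Q *ᵥ (Q⁻¹ *ᵥ c) = c := by
    rw [mulVec_mulVec, mul_nonsing_inv _ ((isUnit_iff_isUnit_det Q).mp (hQ.isUnit hδ1)),
      one_mulVec]
  obtain ⟨hQ1, hQ2⟩ := hQ (Q⁻¹ *ᵥ c)
  rw [hc] at hQ1 hQ2
  rw [← mulVec_mulVec]
  exact bounds_of_common_approx hδ0 hδ1 (enorm2_nonneg _) hQ1 hQ2 (hX _).1 (hX _).2

end IsApproxIsometry

section shiftMat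

variable {N K K' m : ℕ} (E : Fin m → Matrix (Fin N) (Fin N) ℂ) (G : Matrix (Fin N) (Fin K) ℂ)

lemma shiftMat_mul (M : Matrix (Fin K) (Fin K') ℂ) :
    shiftMat E (G * M) = shiftMat E G * (M ⊗ₖ (1 : Matrix (Fin m) (Fin m) ℂ)) := by
  ext a ⟨k, i⟩
  simp only [shiftMat, of_apply, mul_apply, Fintype.sum_prod_type, kroneckerMap_apply, one_apply,
    mul_ite, mul_one, mul_zero, Finset.sum_ite_eq', Finset.mem_univ, if_true, Finset.mul_sum,
    Finset.sum_mul, mul_assoc]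
  exact Finset.sum_comm

lemma shiftMat_mulVec_of_support_block (i : Fin m) (v : Fin K → ℂ) :
    shiftMat E G *ᵥ (fun p => if p.2 = i then v p.1 else 0) = (E i * G) *ᵥ v := by
  ext a
  simp only [mulVec, dotProduct, shiftMat, of_apply, Fintype.sum_prod_type]
  rw [Finset.sum_comm, Finset.sum_eq_single i (fun j _ hj => by simp [hj]) (by simp)]
  simp

lemma enorm2_of_support_block (i : Fin m) (v : Fin K → ℂ) :
    enorm2 (fun p : Fin K × Fin m => if p.2 = i then v p.1 else 0) = enorm2 v := by
  rw [← sq_eq_sq₀ (enorm2_nonneg _) (enorm2_nonneg _), sq_enorm2_prod,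
    Finset.sum_eq_single i (fun j _ hj => by simp [hj, enorm2]) (by simp)]
  simp

variable {E G}

lemma IsApproxIsometry.of_shiftMat {δ : ℝ} (hX : IsApproxIsometry δ (shiftMat E G))
    (i : Fin m) : IsApproxIsometry δ (E i * G) := fun v => by
  simpa only [shiftMat_mulVec_of_support_block, enorm2_of_support_block] using
    hX fun p => if p.2 = i then v p.1 else 0

end shiftMat

theorem stmt_12_general {N K m : ℕ} (hm : 0 < m)
    (E : Fin m → Matrix (Fin N) (Fin N) ℂ) (hE : IsUnitaryErrorSet E)
    (G : Matrix (Fin N) (Fin K) ℂ)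
    (δ : ℝ) (hδ0 : 0 ≤ δ) (hδ1 : δ < 1)
    (hX : IsApproxIsometry δ (shiftMat E G)) :
    IsApproxIsometry (2 * δ / (1 - δ)) (shiftMat E (isometrize G)) := by
  set hGG := posSemidef_conjTranspose_mul_self G
  have hG : IsApproxIsometry δ G := by
    refine (isApproxIsometry_congr ?_).mp (hX.of_shiftMat ⟨0, hm⟩)
    rw [conjTranspose_mul, Matrix.mul_assoc, ← Matrix.mul_assoc _ (E _), (hE.1 _).1,
      Matrix.one_mul]
  have hP : IsApproxIsometry δ hGG.sqrt :=
    (isApproxIsometry_congr hGG.conjTranspose_sqrt_mul_sqrt).mpr hG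
  rw [isometrize, shiftMat_mul, ← (inv_one : (1 : Matrix (Fin m) (Fin m) ℂ)⁻¹ = 1),
    ← inv_kronecker]
  exact hX.mul_inv (hP.kronecker_one hδ0 hδ1.le) hδ0 hδ1

/-- if `X = Σ_i E_i G ⊗ ⟨i|` is a `δ`-approximate isometry (`0 ≤ δ < 1`) and
`V = isometrize G`, then `Y = Σ_i E_i V ⊗ ⟨i|` is a `2δ/(1-δ)`-approximate isometry. -/
theorem stmt_12 {N K m : ℕ} (hK : 0 < K) (hm : 0 < m) (hKm : K * m ≤ N)
    (E : Fin m → Matrix (Fin N) (Fin N) ℂ) (hE : IsUnitaryErrorSet E)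
    (G : Matrix (Fin N) (Fin K) ℂ)
    (δ : ℝ) (hδ0 : 0 ≤ δ) (hδ1 : δ < 1)
    (hX : IsApproxIsometry δ (shiftMat E G)) :
    IsApproxIsometry (2 * δ / (1 - δ)) (shiftMat E (isometrize G)) :=
  stmt_12_general hm E hE G δ hδ0 hδ1 hX
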